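/- arXiv:math/0604227 — 10 statements merged into one kernel-verified Lean document; each statement's English description precedes it below -/
import Mathlib

section
/- Let q be a real number with 0 < q < 1 and let n be a nonnegative integer. Then the Abel-regularized alternating sum of n-th powers of q-integers equals the n-th q-Euler number: lim_{r→1⁻} 2·∑_{l=0}^∞ (−1)^l · r^l · [l]_q^n = E_{n,q} = 2·(1/(1−q))^n · ∑_{j=0}^n C(n,j)·(−1)^j/(1+q^j). (In particular, for each 0 < r < 1 the series ∑_{l=0}^∞ (−1)^l r^l [l]_q^n converges and the stated limit as r → 1⁻ exists.) -/
open Filter Finset Topology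

/-- For `0 < q < 1` and `n : ℕ`, the Abel-regularized alternating sum of
`n`-th powers of `q`-integers equals the `q`-Euler number
`E_{n,q} = 2·(1/(1−q))^n · ∑_{j=0}^n C(n,j)·(−1)^j/(1+q^j)`; in particular the series
converges for each `0 < r < 1` and the limit as `r → 1⁻` exists. -/
theorem abel_sum_qEuler (q : ℝ) (hq0 : 0 < q) (hq1 : q < 1) (n : ℕ) :
    (∀ r ∈ Set.Ioo (0:ℝ) 1,
      Summable (fun l : ℕ => (-1:ℝ)^l * r^l * ((1 - q^l)/(1 - q))^n)) ∧
    Tendsto (fun r : ℝ => 2 * ∑' l : ℕ, (-1:ℝ)^l * r^l * ((1 - q^l)/(1 - q))^n)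
      (nhdsWithin (1:ℝ) (Set.Iio 1))
      (nhds (2 * (1/(1-q))^n *
        ∑ j ∈ Finset.range (n+1), (n.choose j : ℝ) * (-1)^j / (1 + q^j))) := by
  set c : ℕ → ℝ := fun j => (1/(1-q))^n * ((n.choose j : ℝ) * (-1)^j) with hc
  -- pointwise binomial expansion
  have key : ∀ r : ℝ, ∀ l : ℕ,
      (-1:ℝ)^l * r^l * ((1 - q^l)/(1 - q))^n
      = ∑ j ∈ Finset.range (n+1), c j * (-(r*q^j))^l := by
    intro r l
    have expand : (1 - q^l : ℝ)^n
        = ∑ j ∈ Finset.range (n+1), (-q^l)^j * (n.choose j : ℝ) := by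
      have h := add_pow (-q^l : ℝ) 1 n
      simpa [sub_eq_add_neg, add_comm] using h
    have : ((1 - q^l)/(1 - q) : ℝ)^n = (1/(1-q))^n * (1 - q^l)^n := by
      rw [div_pow, div_pow, one_pow]; ring
    rw [this, expand, Finset.mul_sum, Finset.mul_sum]
    refine Finset.sum_congr rfl fun j hj => ?_
    have h1 : ((-q^l)^j : ℝ) = (-1)^j * (q^j)^l := by
      rw [neg_pow, ← pow_mul, ← pow_mul, Nat.mul_comm]
    have h2 : ((-(r*q^j))^l : ℝ) = (-1)^l * r^l * (q^j)^l := by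
      rw [neg_pow, mul_pow]; ring
    rw [h1, h2]; ring
  have hnorm : ∀ r ∈ Set.Ioo (0:ℝ) 1, ∀ j : ℕ, ‖(-(r*q^j) : ℝ)‖ < 1 := by
    intro r hr j
    rw [norm_neg, Real.norm_eq_abs, abs_of_nonneg (mul_nonneg hr.1.le (pow_pos hq0 j).le)]
    calc r * q^j ≤ r * 1 := by
          have := pow_le_one₀ hq0.le hq1.le (n := j)
          nlinarith [hr.1]
      _ < 1 := by simpa using hr.2
  have hsummable : ∀ r ∈ Set.Ioo (0:ℝ) 1,
      Summable (fun l : ℕ => (-1:ℝ)^l * r^l * ((1 - q^l)/(1 - q))^n) := by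
    intro r hr
    have : Summable (fun l : ℕ => ∑ j ∈ Finset.range (n+1), c j * (-(r*q^j))^l) := by
      apply summable_sum
      intro j hj
      exact (summable_geometric_of_norm_lt_one (hnorm r hr j)).mul_left _
    exact this.congr fun l => (key r l).symm
  refine ⟨hsummable, ?_⟩
  -- tsum formula
  have htsum : ∀ r ∈ Set.Ioo (0:ℝ) 1,
      (∑' l : ℕ, (-1:ℝ)^l * r^l * ((1 - q^l)/(1 - q))^n)
      = ∑ j ∈ Finset.range (n+1), c j * (1 + r*q^j)⁻¹ := by
    intro r hr
    have h1 : (∑' l : ℕ, (-1:ℝ)^l * r^l * ((1 - q^l)/(1 - q))^n)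
        = ∑' l : ℕ, ∑ j ∈ Finset.range (n+1), c j * (-(r*q^j))^l :=
      tsum_congr fun l => key r l
    rw [h1, Summable.tsum_finsetSum (fun j hj =>
      (summable_geometric_of_norm_lt_one (hnorm r hr j)).mul_left _)]
    refine Finset.sum_congr rfl fun j hj => ?_
    rw [tsum_mul_left, tsum_geometric_of_norm_lt_one (hnorm r hr j),
      sub_neg_eq_add]
  -- the continuous limit function
  have hq_pos : ∀ j : ℕ, (0:ℝ) < 1 + q^j := fun j => by positivity
  have hcont : Tendsto (fun r : ℝ => 2 * ∑ j ∈ Finset.range (n+1), c j * (1 + r*q^j)⁻¹)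
      (nhdsWithin (1:ℝ) (Set.Iio 1))
      (nhds (2 * ∑ j ∈ Finset.range (n+1), c j * (1 + 1*q^j)⁻¹)) := by
    have hterm : ∀ j : ℕ, ContinuousAt (fun r : ℝ => c j * (1 + r*q^j)⁻¹) 1 := fun j =>
      continuousAt_const.mul ((continuousAt_const.add
        (continuousAt_id.mul continuousAt_const)).inv₀ (by simpa using (hq_pos j).ne'))
    have hsum : ContinuousAt
        (fun r : ℝ => ∑ j ∈ Finset.range (n+1), c j * (1 + r*q^j)⁻¹) 1 :=
      tendsto_finset_sum _ fun j _ => hterm j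
    exact (continuousAt_const.mul hsum).tendsto.mono_left nhdsWithin_le_nhds
  have hval : (2 * ∑ j ∈ Finset.range (n+1), c j * (1 + 1*q^j)⁻¹)
      = 2 * (1/(1-q))^n * ∑ j ∈ Finset.range (n+1), (n.choose j : ℝ) * (-1)^j / (1 + q^j) := by
    rw [mul_assoc]
    congr 1
    rw [Finset.mul_sum]
    refine Finset.sum_congr rfl fun j hj => ?_
    have hne := (hq_pos j).ne'
    simp only [hc]
    field_simp
  rw [← hval]
  refine hcont.congr' ?_
  filter_upwards [Ioo_mem_nhdsLT_of_mem (Set.right_mem_Ioc.mpr one_pos)] with r hr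
  rw [htsum r hr]
end

section
/- Let q be a real number with 0 < q < 1, let x be a real number, and let n be a nonnegative integer. Then the q-Euler polynomial satisfies E_{n,q}(x) = ∑_{k=0}^n C(n,k) · q^{kx} · E_{k,q} · [x]_q^{n−k}, where E_{k,q} are the q-Euler numbers. -/
/-!
Put `t = q ^ x` and `c j = 1 / (1 + q ^ j)`, so that `E_{k,q} = 2 (1 - q)⁻ᵏ ∑ⱼ C(k,j) (-1)ʲ c j`.
Let `L` be the linear functional on `ℝ[X]` with `L (X ^ j) = c j`. Then `L ((1 - X) ^ k)` is the
alternating binomial sum in `E_{k,q}` and `L ((1 - t X) ^ n)` is the sum in `E_{n,q}(x)`, and the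
theorem is `L` applied to the binomial expansion of `1 - t X = t (1 - X) + (1 - t)`.
-/

open Finset Polynomial

def binomialTransform {R : Type*} [CommRing R] (c : ℕ → R) (n : ℕ) : R :=
  ∑ j ∈ range (n + 1), (n.choose j : R) * (-1) ^ j * c j

namespace Polynomial

variable {R : Type*} [CommRing R]

def momentFunctional (c : ℕ → R) : R[X] →ₗ[R] R :=
  lsum fun j => LinearMap.mulLeft R (c j)

variable (c : ℕ → R)

theorem momentFunctional_C_mul_X_pow (a : R) (j : ℕ) :
    momentFunctional c (C a * X ^ j) = a * c j := by
  rw [C_mul_X_pow_eq_monomial, momentFunctional, lsum_apply, sum_monomial_index] <;>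
    simp [mul_comm]

theorem momentFunctional_C_mul (a : R) (p : R[X]) :
    momentFunctional c (C a * p) = a * momentFunctional c p := by
  rw [← smul_eq_C_mul, map_smul, smul_eq_mul]

theorem momentFunctional_one_sub_C_mul_X_pow (t : R) (n : ℕ) :
    momentFunctional c ((1 - C t * X) ^ n) = binomialTransform (fun j => t ^ j * c j) n := by
  rw [sub_eq_neg_add, add_pow, map_sum]
  refine sum_congr rfl fun j _ => ?_
  have hterm : (-(C t * X)) ^ j * 1 ^ (n - j) * (n.choose j : R[X]) =
      C ((n.choose j : R) * (-1) ^ j * t ^ j) * X ^ j := by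
    simp only [map_mul, map_pow, map_neg, map_one, map_natCast]
    ring
  rw [hterm, momentFunctional_C_mul_X_pow, mul_assoc]

theorem momentFunctional_one_sub_X_pow (n : ℕ) :
    momentFunctional c ((1 - X) ^ n) = binomialTransform c n := by
  simpa using momentFunctional_one_sub_C_mul_X_pow c 1 n

end Polynomial

theorem sum_choose_mul_pow_mul_binomialTransform {R : Type*} [CommRing R] (c : ℕ → R)
    (t : R) (n : ℕ) :
    ∑ k ∈ range (n + 1), (n.choose k : R) * t ^ k * binomialTransform c k * (1 - t) ^ (n - k) =
      binomialTransform (fun j => t ^ j * c j) n := by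
  have hsplit : (1 - C t * X : R[X]) = C t * (1 - X) + C (1 - t) := by
    simp only [map_sub, map_one]
    ring
  rw [← momentFunctional_one_sub_C_mul_X_pow, hsplit, add_pow, map_sum]
  refine sum_congr rfl fun k _ => ?_
  have hterm : (C t * (1 - X)) ^ k * C (1 - t) ^ (n - k) * (n.choose k : R[X]) =
      C ((n.choose k : R) * t ^ k * (1 - t) ^ (n - k)) * (1 - X) ^ k := by
    simp only [mul_pow, map_mul, map_pow, map_natCast]
    ring
  rw [hterm, momentFunctional_C_mul, momentFunctional_one_sub_X_pow]
  ring

theorem qEulerPoly_expansion_general (q : ℝ) (hq0 : 0 < q) (x : ℝ) (n : ℕ) :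
    2 * (1/(1-q))^n *
        ∑ j ∈ Finset.range (n+1), (n.choose j : ℝ) * (-1)^j * q ^ (x * (j:ℝ)) / (1 + q^j)
    = ∑ k ∈ Finset.range (n+1), (n.choose k : ℝ) * q ^ ((k:ℝ) * x) *
        (2 * (1/(1-q))^k *
          ∑ j ∈ Finset.range (k+1), (k.choose j : ℝ) * (-1)^j / (1 + q^j)) *
        ((1 - q ^ x)/(1-q))^(n-k) := by
  have hpow (k : ℕ) : q ^ ((k : ℝ) * x) = (q ^ x) ^ k := by
    rw [mul_comm, Real.rpow_mul hq0.le, Real.rpow_natCast]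
  have hfactor : ∀ k ∈ range (n + 1),
      (n.choose k : ℝ) * q ^ ((k : ℝ) * x) *
        (2 * (1/(1-q))^k * ∑ j ∈ range (k+1), (k.choose j : ℝ) * (-1)^j / (1 + q^j)) *
        ((1 - q ^ x)/(1-q))^(n-k) =
      2 * (1/(1-q))^n * ((n.choose k : ℝ) * (q ^ x) ^ k *
        binomialTransform (fun j => (1 + q ^ j)⁻¹) k * (1 - q ^ x) ^ (n-k)) := by
    intro k hk
    rw [← pow_mul_pow_sub (1/(1-q)) (Nat.lt_succ_iff.mp (mem_range.mp hk)), hpow,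
      binomialTransform]
    simp only [div_eq_mul_inv, mul_pow]
    ring
  rw [sum_congr rfl hfactor, ← mul_sum, sum_choose_mul_pow_mul_binomialTransform,
    binomialTransform]
  simp only [div_eq_mul_inv, ← hpow, mul_comm x, mul_assoc]

/-- For `0 < q < 1`, `x : ℝ` and `n : ℕ`, the `q`-Euler polynomial satisfies
`E_{n,q}(x) = ∑_{k=0}^n C(n,k)·q^{kx}·E_{k,q}·[x]_q^{n−k}`.  Here `q^{kx}` and `q^x` are
real powers (`rpow`). -/
theorem qEulerPoly_expansion (q : ℝ) (hq0 : 0 < q) (hq1 : q < 1) (x : ℝ) (n : ℕ) :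
    2 * (1/(1-q))^n *
        ∑ j ∈ Finset.range (n+1), (n.choose j : ℝ) * (-1)^j * q ^ (x * (j:ℝ)) / (1 + q^j)
    = ∑ k ∈ Finset.range (n+1), (n.choose k : ℝ) * q ^ ((k:ℝ) * x) *
        (2 * (1/(1-q))^k *
          ∑ j ∈ Finset.range (k+1), (k.choose j : ℝ) * (-1)^j / (1 + q^j)) *
        ((1 - q ^ x)/(1-q))^(n-k) :=
  qEulerPoly_expansion_general q hq0 x n
end

section
/- Let q be a real number with 0 < q < 1, let n ≥ 1 be an integer and let m > 1 be an integer. Then the alternating sum of m-th powers of the q-integers up to n−1 is given by ∑_{l=0}^{n−1} (−1)^l · [l]_q^m = ( (−1)^{n+1} · E_{m,q}(n) + E_{m,q} ) / 2, where E_{m,q} are the q-Euler numbers and E_{m,q}(n) is the q-Euler polynomial evaluated at n. -/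
open Filter Finset Topology

/-- For `0 < q < 1`, `n ≥ 1`, `m > 1`,
`∑_{l=0}^{n−1} (−1)^l·[l]_q^m = ((−1)^{n+1}·E_{m,q}(n) + E_{m,q})/2`. -/
theorem alt_sum_qint_pow (q : ℝ) (hq0 : 0 < q) (hq1 : q < 1) (n m : ℕ)
    (hn : 1 ≤ n) (hm : 1 < m) :
    ∑ l ∈ Finset.range n, (-1:ℝ)^l * ((1 - q^l)/(1-q))^m
    = ((-1)^(n+1) *
        (2 * (1/(1-q))^m *
          ∑ j ∈ Finset.range (m+1), (m.choose j : ℝ) * (-1)^j * q^(n*j) / (1 + q^j))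
      + 2 * (1/(1-q))^m *
          ∑ j ∈ Finset.range (m+1), (m.choose j : ℝ) * (-1)^j / (1 + q^j)) / 2 := by
  have h1q : (1:ℝ) - q ≠ 0 := by linarith
  have hden : ∀ j : ℕ, (1:ℝ) + q^j ≠ 0 := fun j => by positivity
  have hpow : ∀ a b : ℕ, ((-q^a : ℝ))^b = (-1)^b * q^(a*b) := by
    intro a b
    rw [show (-q^a : ℝ) = (-1) * q^a from by ring, mul_pow, ← pow_mul]
  -- geometric sum
  have geo : ∀ j : ℕ, ∑ l ∈ Finset.range n, (-1:ℝ)^l * q^(l*j)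
      = (1 - (-1)^n * q^(n*j))/(1+q^j) := by
    intro j
    have hr : (-q^j : ℝ) ≠ 1 := by nlinarith [pow_pos hq0 j]
    have h := geom_sum_eq hr n
    have h2 : ∑ l ∈ Finset.range n, (-1:ℝ)^l * q^(l*j)
        = ∑ l ∈ Finset.range n, (-q^j : ℝ)^l := by
      refine Finset.sum_congr rfl fun l _ => ?_
      rw [hpow j l, Nat.mul_comm]
    rw [h2, h, hpow j n]
    have hd : (-q^j : ℝ) - 1 ≠ 0 := by nlinarith [pow_pos hq0 j]
    field_simp
    ring
  -- binomial expansion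
  have expand : ∀ l : ℕ, ((1 - q^l)/(1-q))^m
      = (∑ j ∈ Finset.range (m+1), (m.choose j : ℝ) * (-1)^j * q^(l*j)) * (1/(1-q))^m := by
    intro l
    rw [div_pow, one_div, inv_pow, div_eq_mul_inv]
    congr 1
    have h : (1:ℝ) - q^l = (-q^l) + 1 := by ring
    rw [h, add_pow]
    refine Finset.sum_congr rfl fun j _ => ?_
    rw [hpow l j, one_pow]
    ring
  calc ∑ l ∈ Finset.range n, (-1:ℝ)^l * ((1 - q^l)/(1-q))^m
      = ∑ l ∈ Finset.range n, ∑ j ∈ Finset.range (m+1),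
          (m.choose j : ℝ) * (-1)^j * ((-1)^l * q^(l*j)) * (1/(1-q))^m := by
        refine Finset.sum_congr rfl fun l _ => ?_
        rw [expand l, Finset.sum_mul, Finset.mul_sum]
        exact Finset.sum_congr rfl fun j _ => by ring
    _ = ∑ j ∈ Finset.range (m+1), (m.choose j : ℝ) * (-1)^j *
          ((1 - (-1)^n * q^(n*j))/(1+q^j)) * (1/(1-q))^m := by
        rw [Finset.sum_comm]
        refine Finset.sum_congr rfl fun j _ => ?_
        rw [← geo j, Finset.mul_sum, Finset.sum_mul]
    _ = _ := by
        rw [Finset.mul_sum, Finset.mul_sum, Finset.mul_sum, ← Finset.sum_add_distrib,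
          Finset.sum_div]
        refine Finset.sum_congr rfl fun j _ => ?_
        have h := hden j
        field_simp
        ring
end

section
/- Let q be a real number with 0 < q < 1, let f be an odd positive integer, let x be a real number, and let m be a nonnegative integer. Then the q-Euler polynomials satisfy the distribution relation [f]_q^m · ∑_{a=0}^{f−1} (−1)^a · E_{m,q^f}((x+a)/f) = E_{m,q}(x), where E_{m,q^f} denotes the q-Euler polynomial with q replaced by q^f. -/
open Filter Finset Topology

/-! For odd `f`, summing `(-1)^a (q^f)^{(x+a)j/f}` over `a < f` is a geometric sum with ratio
`-q^j` which, since `(-q^j)^f = -q^{fj}`, equals `q^{xj} (1 + q^{fj})/(1 + q^j)`. So each term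
`q^{xj}/(1 + q^j)` of `E_{m,q}(x)` is the alternating sum over `a` of the corresponding terms of
`E_{m,q^f}((x+a)/f)`, and the prefactors match: `[f]_q^m (1/(1-q^f))^m = (1/(1-q))^m`. -/

/-- The `q`-Euler polynomial `E_{n,q}(x) = 2·(1/(1−q))^n · ∑_{j=0}^n C(n,j)·(−1)^j·q^{xj}/(1+q^j)`,
where `q^{xj}` is a real power (`rpow`). -/
noncomputable def qEulerPoly (q : ℝ) (n : ℕ) (x : ℝ) : ℝ :=
  2 * (1/(1-q))^n *
    ∑ j ∈ Finset.range (n+1), (n.choose j : ℝ) * (-1)^j * q ^ (x * (j:ℝ)) / (1 + q^j)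

theorem one_add_mul_sum_range_neg_pow {R : Type*} [CommRing R] (r : R) {f : ℕ} (hf : Odd f) :
    (1 + r) * ∑ a ∈ range f, (-r) ^ a = 1 + r ^ f := by
  simpa only [sub_neg_eq_add, hf.neg_pow] using mul_neg_geom_sum (-r) f

theorem rpow_pow_add_div_mul {q : ℝ} (hq : 0 < q) {f : ℕ} (hf : f ≠ 0) (x : ℝ) (a j : ℕ) :
    (q ^ f) ^ ((x + a) / f * j) = q ^ (x * j) * (q ^ j) ^ a := by
  have hexp : (f : ℝ) * ((x + a) / f * j) = x * j + (a * j : ℕ) := by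
    push_cast
    field_simp
  rw [← Real.rpow_natCast q f, ← Real.rpow_mul hq.le, hexp, Real.rpow_add hq, Real.rpow_natCast,
    pow_mul']

theorem sum_range_neg_one_pow_mul_rpow_div {q : ℝ} (hq : 0 < q) {f : ℕ} (hf : Odd f)
    (x : ℝ) (j : ℕ) :
    ∑ a ∈ range f, (-1) ^ a * ((q ^ f) ^ ((x + a) / f * j) / (1 + (q ^ f) ^ j)) =
      q ^ (x * j) / (1 + q ^ j) := by
  have hgeom : (1 + q ^ j) * ∑ a ∈ range f, (-q ^ j) ^ a = 1 + (q ^ f) ^ j := by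
    rw [one_add_mul_sum_range_neg_pow _ hf, ← pow_mul, ← pow_mul, mul_comm]
  have hsum : ∑ a ∈ range f, (-q ^ j) ^ a ≠ 0 :=
    right_ne_zero_of_mul (by rw [hgeom]; positivity)
  calc ∑ a ∈ range f, (-1) ^ a * ((q ^ f) ^ ((x + a) / f * j) / (1 + (q ^ f) ^ j))
      = q ^ (x * j) / (1 + (q ^ f) ^ j) * ∑ a ∈ range f, (-q ^ j) ^ a := by
        rw [mul_sum]
        refine sum_congr rfl fun a _ => ?_
        rw [rpow_pow_add_div_mul hq hf.pos.ne', neg_pow]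
        ring
    _ = q ^ (x * j) / (1 + q ^ j) := by
        rw [← hgeom]
        field_simp

theorem qEulerPoly_distribution_general (q : ℝ) (hq0 : 0 < q) (hq1 : q < 1)
    (f : ℕ) (hf : Odd f) (x : ℝ) (m : ℕ) :
    ((1 - q^f)/(1-q))^m *
      ∑ a ∈ Finset.range f, (-1:ℝ)^a * qEulerPoly (q^f) m ((x + (a:ℝ))/(f:ℝ))
    = qEulerPoly q m x := by
  have hqf : q ^ f < 1 := pow_lt_one₀ hq0.le hq1 hf.pos.ne'
  have hprefactor : ((1 - q ^ f) / (1 - q)) ^ m * (1 / (1 - q ^ f)) ^ m = (1 / (1 - q)) ^ m := by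
    rw [← mul_pow]
    congr 1
    field_simp [(sub_pos.2 hqf).ne']
  unfold qEulerPoly
  calc _ = ∑ j ∈ range (m + 1), 2 * (((1 - q ^ f) / (1 - q)) ^ m * (1 / (1 - q ^ f)) ^ m) *
        ((m.choose j : ℝ) * (-1) ^ j) *
          ∑ a ∈ range f, (-1) ^ a * ((q ^ f) ^ ((x + a) / f * j) / (1 + (q ^ f) ^ j)) := by
        simp only [mul_sum]
        rw [sum_comm]
        exact sum_congr rfl fun j _ => sum_congr rfl fun a _ => by ring
    _ = _ := by
        rw [hprefactor, mul_sum]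
        refine sum_congr rfl fun j _ => ?_
        rw [sum_range_neg_one_pow_mul_rpow_div hq0 hf]
        ring

/-- distribution relation
`[f]_q^m · ∑_{a=0}^{f−1} (−1)^a · E_{m,q^f}((x+a)/f) = E_{m,q}(x)` for odd positive `f`. -/
theorem qEulerPoly_distribution (q : ℝ) (hq0 : 0 < q) (hq1 : q < 1)
    (f : ℕ) (hf : Odd f) (hfpos : 0 < f) (x : ℝ) (m : ℕ) :
    ((1 - q^f)/(1-q))^m *
      ∑ a ∈ Finset.range f, (-1:ℝ)^a * qEulerPoly (q^f) m ((x + (a:ℝ))/(f:ℝ))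
    = qEulerPoly q m x :=
  qEulerPoly_distribution_general q hq0 hq1 f hf x m
end

section
/- Let k ≥ 1 and m ≥ 1 be integers. Then the alternating sum of m-th powers of consecutive integers satisfies Euler's formula ∑_{l=0}^{k−1} (−1)^l · l^m = ( (−1)^{k+1} · E_m(k) + E_m ) / 2, where E_m are the ordinary Euler numbers and E_m(x) are the ordinary Euler polynomials. -/
/-!
Write `E_m(x) = m! · [t^m] (∑ₙ Eₙ tⁿ/n!) · e^{xt}`. The recursion for the Euler numbers says that
their exponential generating function is `2 / (e^t + 1)`, so `e^{(x+1)t} = e^t · e^{xt}` gives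
`E_m(x + 1) + E_m(x) = 2 x^m`. Multiplied by `(-1)^l` and summed over `l < k`, the left side
telescopes to `E_m(0) - (-1)^k E_m(k)`, and `E_m(0) = E_m`.
-/

open Finset PowerSeries Nat

theorem sum_range_neg_one_pow_mul_add_succ {R : Type*} [CommRing R] (f : ℕ → R) (k : ℕ) :
    ∑ l ∈ range k, (-1) ^ l * (f (l + 1) + f l) = f 0 - (-1) ^ k * f k := by
  have h := sum_range_sub' (fun l => (-1 : R) ^ l * f l) k
  rw [pow_zero, one_mul] at h
  rw [← h]
  exact sum_congr rfl fun l _ => by ring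

section Appell

variable {K : Type*} [Field K] [CharZero K]

def appellPoly (a : ℕ → K) (m : ℕ) (x : K) : K :=
  ∑ i ∈ range (m + 1), (m.choose i : K) * a i * x ^ (m - i)

def egf (a : ℕ → K) : K⟦X⟧ :=
  PowerSeries.mk fun n => a n / n !

theorem appellPoly_eq_factorial_mul_coeff (a : ℕ → K) (m : ℕ) (x : K) :
    appellPoly a m x = m ! * coeff m (egf a * rescale x (exp K)) := by
  rw [coeff_mul, Nat.sum_antidiagonal_eq_sum_range_succ_mk, mul_sum, appellPoly]
  refine sum_congr rfl fun i hi => ?_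
  rw [Nat.cast_choose K (mem_range_succ_iff.1 hi)]
  simp only [egf, coeff_mk, coeff_rescale, coeff_exp, map_div₀, map_one, map_natCast]
  field_simp

theorem appellPoly_zero (a : ℕ → K) (m : ℕ) : appellPoly a m 0 = a m := by
  rw [appellPoly_eq_factorial_mul_coeff, rescale_zero_apply, constantCoeff_exp, map_one, mul_one,
    egf, coeff_mk, mul_div_cancel₀ _ (Nat.cast_ne_zero.2 m.factorial_ne_zero)]

theorem egf_mul_exp_add_one {E : ℕ → K} (hE0 : E 0 = 1)
    (hE : ∀ n : ℕ, 1 ≤ n → (∑ j ∈ range (n + 1), (n.choose j : K) * E j) + E n = 0) :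
    egf E * (exp K + 1) = 2 := by
  ext n
  have hcoeff :
      coeff n (egf E * exp K) = (∑ j ∈ range (n + 1), (n.choose j : K) * E j) / n ! := by
    have h := appellPoly_eq_factorial_mul_coeff E n 1
    rw [rescale_one, RingHom.id_apply] at h
    rw [eq_div_iff (Nat.cast_ne_zero.2 n.factorial_ne_zero), mul_comm, ← h]
    simp [appellPoly]
  rw [← map_ofNat (C (R := K)), coeff_C, mul_add, mul_one, map_add, hcoeff, egf, coeff_mk]
  rcases n.eq_zero_or_pos with rfl | hn
  · norm_num [hE0]
  · rw [← add_div, hE n hn, zero_div, if_neg hn.ne']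

theorem appellPoly_add_one_add_self {E : ℕ → K} (h : egf E * (exp K + 1) = 2) (m : ℕ) (x : K) :
    appellPoly E m (x + 1) + appellPoly E m x = 2 * x ^ m := by
  have hshift : egf E * rescale (x + 1) (exp K) + egf E * rescale x (exp K)
      = C 2 * rescale x (exp K) := by
    rw [← exp_mul_exp_eq_exp_add, rescale_one, RingHom.id_apply, map_ofNat]
    linear_combination rescale x (exp K) * h
  rw [appellPoly_eq_factorial_mul_coeff, appellPoly_eq_factorial_mul_coeff, ← mul_add, ← map_add,
    hshift, coeff_C_mul, coeff_rescale, coeff_exp, map_div₀, map_one, map_natCast]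
  field_simp
  exact mul_div_cancel_left₀ _ (Nat.cast_ne_zero.2 m.factorial_ne_zero)

end Appell

theorem euler_alt_sum_powers_general (E : ℕ → ℝ) (hE0 : E 0 = 1)
    (hE : ∀ n : ℕ, 1 ≤ n →
      (∑ j ∈ Finset.range (n+1), (n.choose j : ℝ) * E j) + E n = 0)
    (k m : ℕ) :
    ∑ l ∈ Finset.range k, (-1:ℝ)^l * (l:ℝ)^m
    = ((-1)^(k+1) * (∑ i ∈ Finset.range (m+1), (m.choose i : ℝ) * E i * (k:ℝ)^(m-i)) + E m) / 2 := by
  have hshift := appellPoly_add_one_add_self (egf_mul_exp_add_one hE0 hE) m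
  have htele := sum_range_neg_one_pow_mul_add_succ (fun l : ℕ => appellPoly E m l) k
  simp only [Nat.cast_succ, hshift, Nat.cast_zero, appellPoly_zero, mul_left_comm _ (2 : ℝ),
    ← mul_sum] at htele
  rw [appellPoly] at htele
  linear_combination htele / 2

/-- Euler's formula
`∑_{l=0}^{k−1} (−1)^l·l^m = ((−1)^{k+1}·E_m(k) + E_m)/2` for `k ≥ 1`, `m ≥ 1`, where `E` is
the ordinary Euler number sequence (characterized by `E 0 = 1` and
`∑_{j=0}^n C(n,j)·E_j + E_n = 0` for `n ≥ 1`) and `E_m(x) = ∑_{i=0}^m C(m,i)·E_i·x^{m−i}`. -/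
theorem euler_alt_sum_powers (E : ℕ → ℝ) (hE0 : E 0 = 1)
    (hE : ∀ n : ℕ, 1 ≤ n →
      (∑ j ∈ Finset.range (n+1), (n.choose j : ℝ) * E j) + E n = 0)
    (k m : ℕ) (hk : 1 ≤ k) (hm : 1 ≤ m) :
    ∑ l ∈ Finset.range k, (-1:ℝ)^l * (l:ℝ)^m
    = ((-1)^(k+1) * (∑ i ∈ Finset.range (m+1), (m.choose i : ℝ) * E i * (k:ℝ)^(m-i)) + E m) / 2 :=
  euler_alt_sum_powers_general E hE0 hE k m
end

section
/- Let q be a real number with 0 < q < 1, let x be a real number, and let n be a nonnegative integer. Then the Abel-regularized value of the Euler q-zeta function ζ_{E,q}(s,x) = ∑_{l=0}^∞ (−1)^l/[l+x]_q^s at the negative integer s = −n equals half the q-Euler polynomial: lim_{r→1⁻} ∑_{l=0}^∞ (−1)^l · r^l · [l+x]_q^n = (1/2)·E_{n,q}(x). (In particular, for each 0 < r < 1 the series ∑_{l=0}^∞ (−1)^l r^l [l+x]_q^n converges and the stated limit as r → 1⁻ exists.) -/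
open Filter Finset Topology

/-- the Abel-regularized value of `ζ_{E,q}(s,x) = ∑ (−1)^l/[l+x]_q^s` at `s = −n`
equals `E_{n,q}(x)/2`: for each `0 < r < 1` the series `∑ (−1)^l r^l [l+x]_q^n` converges, and
its limit as `r → 1⁻` is `(1/2)·E_{n,q}(x)`. -/
theorem qZeta_neg_int (q : ℝ) (hq0 : 0 < q) (hq1 : q < 1) (x : ℝ) (n : ℕ) :
    (∀ r ∈ Set.Ioo (0:ℝ) 1,
      Summable (fun l : ℕ => (-1:ℝ)^l * r^l * ((1 - q^((l:ℝ) + x))/(1-q))^n)) ∧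
    Tendsto (fun r : ℝ => ∑' l : ℕ, (-1:ℝ)^l * r^l * ((1 - q^((l:ℝ) + x))/(1-q))^n)
      (nhdsWithin (1:ℝ) (Set.Iio 1))
      (nhds ((1/2) * qEulerPoly q n x)) := by
  set c : ℕ → ℝ := fun j => (1/(1-q))^n * ((n.choose j : ℝ) * (-1)^j * q ^ (x * (j:ℝ)))
    with hc
  -- key pointwise identity
  have key : ∀ r : ℝ, ∀ l : ℕ, (-1:ℝ)^l * r^l * ((1 - q^((l:ℝ) + x))/(1-q))^n
      = ∑ j ∈ Finset.range (n+1), c j * (-(r * q^j))^l := by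
    intro r l
    have h1 : q ^ ((l:ℝ) + x) = q ^ l * q ^ x := by
      rw [Real.rpow_add hq0, Real.rpow_natCast]
    have h2 : ∀ j : ℕ, q ^ (x * (j:ℝ)) = (q ^ x) ^ j := by
      intro j
      rw [Real.rpow_mul hq0.le, Real.rpow_natCast]
    rw [h1, div_pow, show (1 - q^l * q^x)^n = (-(q^l*q^x) + 1)^n by ring_nf,
      add_pow]
    rw [Finset.sum_div, Finset.mul_sum]
    refine Finset.sum_congr rfl fun j hj => ?_
    simp only [hc]
    rw [h2 j]
    have : (-(q^l*q^x))^j = (-1)^j * (q^j)^l * (q^x)^j := by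
      rw [neg_pow, mul_pow, ← pow_mul, ← pow_mul, Nat.mul_comm]
      ring
    rw [this]
    have : (-(r * q^j))^l = (-1)^l * r^l * (q^j)^l := by
      rw [neg_pow, mul_pow]; ring
    rw [this]
    field_simp
    ring
  have hsum : ∀ r ∈ Set.Ioo (0:ℝ) 1, ∀ j ∈ Finset.range (n+1),
      Summable (fun l : ℕ => c j * (-(r * q^j))^l) := by
    intro r hr j _
    refine Summable.mul_left _ (summable_geometric_of_norm_lt_one ?_)
    rw [norm_neg, Real.norm_eq_abs, abs_of_pos (mul_pos hr.1 (pow_pos hq0 j))]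
    calc r * q^j ≤ r * 1 := by
          exact mul_le_mul_of_nonneg_left (pow_le_one₀ hq0.le hq1.le) hr.1.le
      _ < 1 := by rw [mul_one]; exact hr.2
  have hsumm : ∀ r ∈ Set.Ioo (0:ℝ) 1,
      Summable (fun l : ℕ => (-1:ℝ)^l * r^l * ((1 - q^((l:ℝ) + x))/(1-q))^n) := by
    intro r hr
    refine (summable_sum fun j hj => hsum r hr j hj).congr fun l => (key r l).symm
  refine ⟨hsumm, ?_⟩
  -- value of the tsum
  have htsum : ∀ r ∈ Set.Ioo (0:ℝ) 1,
      (∑' l : ℕ, (-1:ℝ)^l * r^l * ((1 - q^((l:ℝ) + x))/(1-q))^n)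
        = ∑ j ∈ Finset.range (n+1), c j * (1 + r * q^j)⁻¹ := by
    intro r hr
    rw [tsum_congr (key r), Summable.tsum_finsetSum (fun j hj => hsum r hr j hj)]
    refine Finset.sum_congr rfl fun j hj => ?_
    rw [tsum_mul_left, tsum_geometric_of_norm_lt_one (by
      rw [norm_neg, Real.norm_eq_abs, abs_of_pos (mul_pos hr.1 (pow_pos hq0 j))]
      calc r * q^j ≤ r * 1 := mul_le_mul_of_nonneg_left (pow_le_one₀ hq0.le hq1.le) hr.1.le
        _ < 1 := by rw [mul_one]; exact hr.2)]
    rw [sub_neg_eq_add]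
  -- the limit
  have hlim : Tendsto (fun r : ℝ => ∑ j ∈ Finset.range (n+1), c j * (1 + r * q^j)⁻¹)
      (nhdsWithin (1:ℝ) (Set.Iio 1)) (nhds ((1/2) * qEulerPoly q n x)) := by
    have hval : (1/2) * qEulerPoly q n x
        = ∑ j ∈ Finset.range (n+1), c j * (1 + 1 * q^j)⁻¹ := by
      rw [qEulerPoly, Finset.mul_sum, Finset.mul_sum]
      refine Finset.sum_congr rfl fun j hj => ?_
      rw [hc]
      field_simp
    rw [hval]
    refine tendsto_nhdsWithin_of_tendsto_nhds (tendsto_finset_sum _ fun j hj => ?_)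
    refine Tendsto.mul tendsto_const_nhds (Tendsto.inv₀ ?_ ?_)
    · exact (tendsto_const_nhds.add ((continuous_id.mul continuous_const).tendsto 1))
    · positivity
  refine Tendsto.congr' ?_ hlim
  filter_upwards [Ioo_mem_nhdsLT_of_mem (by constructor <;> norm_num : (1:ℝ) ∈ Set.Ioc 0 1)]
    with r hr
  exact (htsum r hr).symm
end

section
/- Let q be a real number with 0 < q < 1, let F be an odd positive integer, let a be an integer with 0 < a < F, and let n ≥ 1 be an integer. Then the Abel-regularized value of the partial Euler q-zeta function H_q(s,a;F) = ∑_{m≡a (mod F), m>0} (−1)^m/[m]_q^s at s = −n satisfies lim_{r→1⁻} ∑_{k=0}^∞ (−1)^{a+k} · r^k · [a+kF]_q^n = (−1)^a · [F]_q^n · E_{n,q^F}(a/F) / 2, where E_{n,q^F}(a/F) is the q^F-Euler polynomial evaluated at a/F. -/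
open Filter Finset Topology

/-! Expanding `[a+kF]_q^n = (1 - q^a (q^F)^k)^n / (1-q)^n` binomially turns the Abel-weighted
series into a finite combination of geometric series with ratios `-r (q^F)^j`, summing to
`(1 + r (q^F)^j)⁻¹`. These are continuous at `r = 1`, and there `q^{aj} = (q^F)^{(a/F) j}`
recovers the `q^F`-Euler polynomial at `a/F`. -/

theorem hasSum_pow_mul_one_sub_mul_pow_pow {K : Type*} [NormedField K] {z x : K}
    (hz : ‖z‖ < 1) (hx : ‖x‖ ≤ 1) (b : K) (n : ℕ) :
    HasSum (fun k ↦ z ^ k * (1 - b * x ^ k) ^ n)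
      (∑ j ∈ range (n + 1), n.choose j * (-b) ^ j / (1 - z * x ^ j)) := by
  have binomial (k : ℕ) : z ^ k * (1 - b * x ^ k) ^ n
      = ∑ j ∈ range (n + 1), n.choose j * (-b) ^ j * (z * x ^ j) ^ k := by
    rw [sub_eq_neg_add, add_pow, mul_sum]
    refine sum_congr rfl fun j _ ↦ ?_
    ring
  have ratio_lt_one (j : ℕ) : ‖z * x ^ j‖ < 1 := by
    rw [norm_mul, norm_pow]
    exact (mul_le_of_le_one_right (norm_nonneg z) (pow_le_one₀ (norm_nonneg x) hx)).trans_lt hz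
  simp_rw [binomial, div_eq_mul_inv]
  exact hasSum_sum fun j _ ↦ (hasSum_geometric_of_norm_lt_one (ratio_lt_one j)).mul_left _

theorem tendsto_tsum_neg_pow_mul_one_sub_mul_pow_pow {x : ℝ} (hx0 : 0 ≤ x) (hx1 : x ≤ 1)
    (b : ℝ) (n : ℕ) :
    Tendsto (fun r : ℝ ↦ ∑' k : ℕ, (-r) ^ k * (1 - b * x ^ k) ^ n) (𝓝[<] 1)
      (𝓝 (∑ j ∈ range (n + 1), n.choose j * (-b) ^ j / (1 + x ^ j))) := by
  have hsum : ∀ r ∈ Set.Ioo (-1 : ℝ) 1, ∑' k : ℕ, (-r) ^ k * (1 - b * x ^ k) ^ n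
      = ∑ j ∈ range (n + 1), n.choose j * (-b) ^ j / (1 + r * x ^ j) := fun r hr ↦ by
    have hr' : ‖-r‖ < 1 := by rw [norm_neg, Real.norm_eq_abs, abs_lt]; exact hr
    rw [(hasSum_pow_mul_one_sub_mul_pow_pow hr' (by rwa [Real.norm_of_nonneg hx0]) b n).tsum_eq]
    simp only [neg_mul, sub_neg_eq_add]
  have hcont : Tendsto (fun r : ℝ ↦ ∑ j ∈ range (n + 1), n.choose j * (-b) ^ j / (1 + r * x ^ j))
      (𝓝 1) (𝓝 (∑ j ∈ range (n + 1), n.choose j * (-b) ^ j / (1 + x ^ j))) := by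
    refine tendsto_finsetSum _ fun j _ ↦ ?_
    have hpos : 1 + 1 * x ^ j ≠ 0 := by positivity
    have : ContinuousAt (fun r : ℝ ↦ n.choose j * (-b) ^ j / (1 + r * x ^ j)) 1 := by
      fun_prop (disch := exact hpos)
    simpa only [one_mul] using this.tendsto
  exact (hcont.mono_left nhdsWithin_le_nhds).congr'
    (eventually_of_mem (Ioo_mem_nhdsLT (by norm_num)) fun r hr ↦ (hsum r hr).symm)

theorem qEulerPoly_pow_natCast_div {q : ℝ} (hq : 0 ≤ q) {F : ℕ} (hF : F ≠ 0) (a n : ℕ) :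
    qEulerPoly (q ^ F) n (a / F) = 2 * (1 / (1 - q ^ F)) ^ n *
      ∑ j ∈ range (n + 1), n.choose j * (-q ^ a) ^ j / (1 + (q ^ F) ^ j) := by
  unfold qEulerPoly
  congr 1
  refine sum_congr rfl fun j _ ↦ ?_
  have hexp : (q ^ F) ^ ((a / F : ℝ) * j) = (q ^ a) ^ j := by
    rw [← Real.rpow_natCast q F, ← Real.rpow_mul hq, ← pow_mul, ← Real.rpow_natCast q (a * j)]
    congr 1
    push_cast
    field_simp
  rw [hexp, neg_pow]
  ring

theorem partial_qZeta_neg_int_general (q : ℝ) (hq0 : 0 < q) (hq1 : q < 1)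
    (F a : ℕ) (hF : Odd F) (n : ℕ) :
    Tendsto (fun r : ℝ => ∑' k : ℕ, (-1:ℝ)^(a+k) * r^k * ((1 - q^(a + k*F))/(1-q))^n)
      (nhdsWithin (1:ℝ) (Set.Iio 1))
      (nhds ((-1:ℝ)^a * ((1 - q^F)/(1-q))^n * qEulerPoly (q^F) n ((a:ℝ)/(F:ℝ)) / 2)) := by
  have hqF : q ^ F < 1 := pow_lt_one₀ hq0.le hq1 hF.pos.ne'
  have hterm (r : ℝ) (k : ℕ) : (-1:ℝ)^(a+k) * r^k * ((1 - q^(a + k*F))/(1-q))^n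
      = (-1) ^ a / (1 - q) ^ n * ((-r) ^ k * (1 - q ^ a * (q ^ F) ^ k) ^ n) := by
    rw [div_pow, pow_add, pow_add, ← pow_mul, mul_comm F k, neg_pow r]
    ring
  simp_rw [hterm]
  convert (tendsto_tsum_neg_pow_mul_one_sub_mul_pow_pow (pow_nonneg hq0.le F) hqF.le
    (q ^ a) n).const_mul ((-1) ^ a / (1 - q) ^ n) using 2
  · exact tsum_mul_left
  · have hqF' : 1 - q ^ F ≠ 0 := by linarith
    rw [qEulerPoly_pow_natCast_div hq0.le hF.pos.ne', div_pow, one_div_pow]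
    field_simp

/-- the Abel-regularized value of the partial Euler `q`-zeta function
`H_q(s,a;F)` at `s = −n`:
`lim_{r→1⁻} ∑_{k=0}^∞ (−1)^{a+k}·r^k·[a+kF]_q^n = (−1)^a·[F]_q^n·E_{n,q^F}(a/F)/2`
for odd `F`, `0 < a < F`, `n ≥ 1`. -/
theorem partial_qZeta_neg_int (q : ℝ) (hq0 : 0 < q) (hq1 : q < 1)
    (F a : ℕ) (hF : Odd F) (ha0 : 0 < a) (haF : a < F) (n : ℕ) (hn : 1 ≤ n) :
    Tendsto (fun r : ℝ => ∑' k : ℕ, (-1:ℝ)^(a+k) * r^k * ((1 - q^(a + k*F))/(1-q))^n)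
      (nhdsWithin (1:ℝ) (Set.Iio 1))
      (nhds ((-1:ℝ)^a * ((1 - q^F)/(1-q))^n * qEulerPoly (q^F) n ((a:ℝ)/(F:ℝ)) / 2)) :=
  partial_qZeta_neg_int_general q hq0 hq1 F a hF n
end

section
/- Let q be a real number with 0 < q < 1 and let n be a nonnegative integer. Then the series [2]_q · ∑_{l=0}^∞ (−1)^l · q^l · [l]_q^n converges absolutely and equals the q-Euler number E*_{n,q} = [2]_q · (1/(1−q))^n · ∑_{j=0}^n C(n,j)·(−1)^j/(1 + q^{j+1}). -/
open Filter Finset Topology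

/-!
Expanding `(1 - q^l)^n` by the binomial theorem turns each term of the series into a finite
combination of the geometric sequences `(-q^(j+1))^l`, `j ≤ n`. Summing these geometric series
termwise gives `∑_j C(n,j) (-1)^j / (1 + q^(j+1))`; absolute convergence follows from
`|(-q)^l (1 - q^l)^n| ≤ 2^n |q|^l`.
-/

theorem one_sub_pow_eq_sum_choose_mul_neg_pow {R : Type*} [CommRing R] (x : R) (n : ℕ) :
    (1 - x) ^ n = ∑ j ∈ range (n + 1), (n.choose j : R) * (-x) ^ j := by
  rw [sub_eq_neg_add, add_pow]
  simp only [one_pow, mul_one, mul_comm]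

theorem neg_pow_mul_one_sub_pow_eq_sum {R : Type*} [CommRing R] (q : R) (n l : ℕ) :
    (-q) ^ l * (1 - q ^ l) ^ n =
      ∑ j ∈ range (n + 1), (n.choose j : R) * (-1) ^ j * (-q ^ (j + 1)) ^ l := by
  rw [one_sub_pow_eq_sum_choose_mul_neg_pow, mul_sum]
  refine sum_congr rfl fun j _ => ?_
  rw [neg_pow, neg_pow (q ^ l), neg_pow (q ^ (j + 1)), ← pow_mul, ← pow_mul]
  ring

section NormedField

variable {𝕜 : Type*} [NormedField 𝕜] {q : 𝕜}

theorem norm_neg_pow_mul_one_sub_pow_le (hq : ‖q‖ < 1) (n l : ℕ) :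
    ‖(-q) ^ l * (1 - q ^ l) ^ n‖ ≤ 2 ^ n * ‖q‖ ^ l := by
  have h : ‖1 - q ^ l‖ ≤ 2 := calc
    ‖1 - q ^ l‖ ≤ ‖(1 : 𝕜)‖ + ‖q‖ ^ l := (norm_sub_le _ _).trans_eq (by rw [norm_pow])
    _ ≤ 2 := by rw [norm_one]; linarith [pow_le_one₀ (norm_nonneg q) hq.le (n := l)]
  rw [norm_mul, norm_pow, norm_pow, norm_neg, mul_comm]
  gcongr

theorem summable_norm_neg_pow_mul_one_sub_pow (hq : ‖q‖ < 1) (n : ℕ) :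
    Summable fun l : ℕ => ‖(-q) ^ l * (1 - q ^ l) ^ n‖ :=
  .of_nonneg_of_le (fun _ => norm_nonneg _) (norm_neg_pow_mul_one_sub_pow_le hq n)
    ((summable_geometric_of_lt_one (norm_nonneg q) hq).mul_left _)

theorem hasSum_neg_pow_mul_one_sub_pow (hq : ‖q‖ < 1) (n : ℕ) :
    HasSum (fun l : ℕ => (-q) ^ l * (1 - q ^ l) ^ n)
      (∑ j ∈ range (n + 1), (n.choose j : 𝕜) * (-1) ^ j / (1 + q ^ (j + 1))) := by
  have hgeom (j : ℕ) : HasSum (fun l : ℕ => (-q ^ (j + 1)) ^ l) (1 + q ^ (j + 1))⁻¹ := by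
    simpa using hasSum_geometric_of_norm_lt_one (ξ := -q ^ (j + 1))
      (by simpa using pow_lt_one₀ (norm_nonneg q) hq j.succ_ne_zero)
  simp_rw [neg_pow_mul_one_sub_pow_eq_sum, div_eq_mul_inv]
  exact hasSum_sum fun j _ => (hgeom j).mul_left _

end NormedField

/-- for `0 < q < 1` and `n : ℕ`, the series `[2]_q·∑ (−1)^l q^l [l]_q^n`
converges absolutely and equals `E*_{n,q} = [2]_q·(1/(1−q))^n·∑_{j=0}^n C(n,j)(−1)^j/(1+q^{j+1})`. -/
theorem kim_qEuler_number (q : ℝ) (hq0 : 0 < q) (hq1 : q < 1) (n : ℕ) :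
    Summable (fun l : ℕ => |(-1:ℝ)^l * q^l * ((1 - q^l)/(1-q))^n|) ∧
    (1+q) * ∑' l : ℕ, (-1:ℝ)^l * q^l * ((1 - q^l)/(1-q))^n
      = (1+q) * (1/(1-q))^n *
          ∑ j ∈ Finset.range (n+1), (n.choose j : ℝ) * (-1)^j / (1 + q^(j+1)) := by
  have hq : ‖q‖ < 1 := by rwa [Real.norm_of_nonneg hq0.le]
  have hterm (l : ℕ) : (-1:ℝ)^l * q^l * ((1 - q^l)/(1-q))^n
      = (1/(1-q))^n * ((-q)^l * (1 - q^l)^n) := by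
    rw [neg_pow, div_pow, one_div_pow]; ring
  simp_rw [hterm]
  constructor
  · simpa only [Real.norm_eq_abs, abs_mul] using
      (summable_norm_neg_pow_mul_one_sub_pow hq n).mul_left |(1 / (1 - q)) ^ n|
  · rw [((hasSum_neg_pow_mul_one_sub_pow hq n).mul_left _).tsum_eq, mul_assoc]
end

section
/- Let q be a real number with 0 < q < 1, let n ≥ 1 and m ≥ 1 be integers. Then ∑_{l=0}^{n−1} (−1)^l · q^l · [l]_q^m = ( (−1)^{n+1} · q^n · E*_{m,q}(n) + E*_{m,q} ) / [2]_q, where E*_{m,q} = [2]_q · (1/(1−q))^m · ∑_{j=0}^m C(m,j)·(−1)^j/(1 + q^{j+1}) and E*_{m,q}(n) = [2]_q · (1/(1−q))^m · ∑_{j=0}^m C(m,j)·(−1)^j·q^{nj}/(1 + q^{j+1}). -/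
/-!
Expanding `[l]_q^m = (1 - q)^{-m} (1 - q^l)^m` by the binomial theorem turns the left-hand side into
`(1 - q)^{-m} ∑_j C(m,j) (-1)^j ∑_{l<n} (-q^{j+1})^l`. Each inner sum is a geometric sum equal to
`(1 - (-1)^n q^{n(j+1)}) / (1 + q^{j+1})`, and splitting it into its two terms gives the
`q^n E*_{m,q}(n)` and `E*_{m,q}` parts of the right-hand side.
-/

open Finset

section

variable {K : Type*}

theorem one_sub_pow_eq_sum [CommRing K] (y : K) (m : ℕ) :
    (1 - y) ^ m = ∑ j ∈ range (m + 1), (m.choose j : K) * (-1) ^ j * y ^ j := by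
  rw [sub_eq_neg_add, add_pow]
  refine sum_congr rfl fun j _ => ?_
  rw [neg_pow]
  ring

variable [Field K]

theorem qInt_pow_eq_sum (x : K) (l m : ℕ) :
    ((1 - x ^ l) / (1 - x)) ^ m
      = (1 / (1 - x)) ^ m * ∑ j ∈ range (m + 1), (m.choose j : K) * (-1) ^ j * x ^ (l * j) := by
  simp_rw [div_pow, one_sub_pow_eq_sum, pow_mul]
  ring

theorem geom_sum_neg_eq (y : K) (hy : 1 + y ≠ 0) (n : ℕ) :
    ∑ l ∈ range n, (-y) ^ l = (1 + (-1) ^ (n + 1) * y ^ n) / (1 + y) := by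
  have hy' : -y - 1 ≠ 0 := fun h => hy (by linear_combination -h)
  rw [geom_sum_eq (fun h => hy' (by rw [h]; ring)), div_eq_div_iff hy' hy, neg_pow]
  ring

theorem sum_alternating_mul_qInt_pow (x : K) (n m : ℕ)
    (hx : ∀ j ∈ range (m + 1), 1 + x ^ (j + 1) ≠ 0) :
    ∑ l ∈ range n, (-1) ^ l * x ^ l * ((1 - x ^ l) / (1 - x)) ^ m
      = (1 / (1 - x)) ^ m *
          ((-1) ^ (n + 1) * x ^ n *
              ∑ j ∈ range (m + 1), (m.choose j : K) * (-1) ^ j * x ^ (n * j) / (1 + x ^ (j + 1))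
            + ∑ j ∈ range (m + 1), (m.choose j : K) * (-1) ^ j / (1 + x ^ (j + 1))) := by
  calc _ = (1 / (1 - x)) ^ m * ∑ j ∈ range (m + 1),
            (m.choose j : K) * (-1) ^ j * ∑ l ∈ range n, (-x ^ (j + 1)) ^ l := by
        simp_rw [qInt_pow_eq_sum, mul_sum]
        rw [sum_comm]
        refine sum_congr rfl fun j _ => sum_congr rfl fun l _ => ?_
        rw [neg_pow]
        ring
    _ = _ := by
        congr 1
        rw [mul_sum, ← sum_add_distrib]
        refine sum_congr rfl fun j hj => ?_
        rw [geom_sum_neg_eq _ (hx j hj)]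
        ring

end

theorem kim_alt_sum_general (q : ℝ) (hq0 : 0 < q) (n m : ℕ) :
    ∑ l ∈ Finset.range n, (-1:ℝ)^l * q^l * ((1 - q^l)/(1-q))^m
    = ((-1)^(n+1) * q^n *
        ((1+q) * (1/(1-q))^m *
          ∑ j ∈ Finset.range (m+1), (m.choose j : ℝ) * (-1)^j * q^(n*j) / (1 + q^(j+1)))
      + (1+q) * (1/(1-q))^m *
          ∑ j ∈ Finset.range (m+1), (m.choose j : ℝ) * (-1)^j / (1 + q^(j+1))) / (1+q) := by
  rw [sum_alternating_mul_qInt_pow q n m fun j _ => by positivity, eq_div_iff (by positivity)]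
  ring

/-- for `0 < q < 1` and `n, m ≥ 1`,
`∑_{l=0}^{n−1} (−1)^l q^l [l]_q^m = ((−1)^{n+1} q^n E*_{m,q}(n) + E*_{m,q})/[2]_q`. -/
theorem kim_alt_sum (q : ℝ) (hq0 : 0 < q) (hq1 : q < 1) (n m : ℕ)
    (hn : 1 ≤ n) (hm : 1 ≤ m) :
    ∑ l ∈ Finset.range n, (-1:ℝ)^l * q^l * ((1 - q^l)/(1-q))^m
    = ((-1)^(n+1) * q^n *
        ((1+q) * (1/(1-q))^m *
          ∑ j ∈ Finset.range (m+1), (m.choose j : ℝ) * (-1)^j * q^(n*j) / (1 + q^(j+1)))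
      + (1+q) * (1/(1-q))^m *
          ∑ j ∈ Finset.range (m+1), (m.choose j : ℝ) * (-1)^j / (1 + q^(j+1))) / (1+q) :=
  kim_alt_sum_general q hq0 n m
end

section
/- Let q be a real number with 0 < q < 1, let x be a real number, let n be a nonnegative integer, and let f be an odd positive integer. Then the Abel-regularized alternating sum ∑_{l=0}^∞ (−1)^l [x+l]_q^n, computed by grouping the index l as l = a + mf with 0 ≤ a < f, satisfies: for each 0 < r < 1 the series ∑_{a=0}^{f−1} (−1)^a ∑_{m=0}^∞ (−1)^m r^m [f]_q^n [ (x+a)/f + m ]_{q^f}^n converges, and lim_{r→1⁻} of this expression equals E_{n,q}(x)/2, where [ (x+a)/f + m ]_{q^f} = (1 − q^{x+a+mf})/(1 − q^f). -/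
/-!
Since `[f]_q [(x+a)/f + m]_{q^f} = [x + a + mf]_q`, the binomial theorem turns the `m`-th term into
a combination of the geometric terms `(-r q^{fj})^m`, `j ≤ n`, so each inner series sums to
`∑_j C(n,j) (-q^{x+a})^j / (1 + r q^{fj})`. Summing over the residues `a` with signs, `f` odd gives
`∑_{a<f} (-q^j)^a = (1 + q^{fj}) / (1 + q^j)`, and the resulting rational function of `r` is
continuous at `r = 1`, where it equals `E_{n,q}(x) / 2`.
-/

open Filter Finset Topology

theorem Real.rpow_add_natCast_mul_natCast {q : ℝ} (hq : 0 < q) (y : ℝ) (m f : ℕ) :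
    q ^ (y + m * f) = q ^ y * (q ^ f) ^ m := by
  rw [Real.rpow_add hq, ← Nat.cast_mul, Real.rpow_natCast, mul_comm m f, pow_mul]

theorem neg_pow_mul_one_sub_mul_pow_pow_eq_sum {R : Type*} [CommRing R] (r s t : R) (n m : ℕ) :
    (-1) ^ m * r ^ m * (1 - t * s ^ m) ^ n =
      ∑ j ∈ range (n + 1), (n.choose j : R) * (-t) ^ j * (-(r * s ^ j)) ^ m := by
  rw [sub_eq_neg_add, add_pow, mul_sum]
  refine sum_congr rfl fun j _ => ?_
  rw [one_pow, mul_one, neg_mul_eq_neg_mul, mul_pow (-t), neg_pow (r * s ^ j), mul_pow r,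
    ← pow_mul, ← pow_mul, mul_comm m j]
  ring

theorem hasSum_neg_pow_mul_one_sub_mul_pow_pow {r s : ℝ} (hr0 : 0 ≤ r) (hr1 : r < 1)
    (hs0 : 0 ≤ s) (hs1 : s ≤ 1) (t : ℝ) (n : ℕ) :
    HasSum (fun m : ℕ => (-1) ^ m * r ^ m * (1 - t * s ^ m) ^ n)
      (∑ j ∈ range (n + 1), (n.choose j : ℝ) * (-t) ^ j / (1 + r * s ^ j)) := by
  simp_rw [neg_pow_mul_one_sub_mul_pow_pow_eq_sum]
  refine hasSum_sum fun j _ => ?_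
  have hrs : ‖-(r * s ^ j)‖ < 1 := by
    rw [norm_neg, Real.norm_of_nonneg (by positivity)]
    exact (mul_le_of_le_one_right hr0 (pow_le_one₀ hs0 hs1)).trans_lt hr1
  simpa [div_eq_mul_inv] using (hasSum_geometric_of_norm_lt_one hrs).mul_left _

theorem sum_range_neg_pow_of_odd {K : Type*} [Field K] {f : ℕ} (hf : Odd f) {u : K}
    (hu : 1 + u ≠ 0) : ∑ a ∈ range f, (-u) ^ a = (1 + u ^ f) / (1 + u) := by
  have hu' : -u ≠ 1 := fun h => hu (by rw [← h]; ring)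
  rw [geom_sum_eq hu', hf.neg_pow, div_eq_div_iff (by contrapose! hu; linear_combination -hu) hu]
  ring

section

variable {q : ℝ}

theorem hasSum_qEuler_residue_series (hq0 : 0 < q) (hq1 : q < 1) (x : ℝ) (n : ℕ) {f : ℕ}
    (hf : 0 < f) {r : ℝ} (hr0 : 0 ≤ r) (hr1 : r < 1) (a : ℕ) :
    HasSum (fun m : ℕ => (-1:ℝ)^m * r^m * ((1 - q^f)/(1-q))^n *
        ((1 - q^(x + (a:ℝ) + (m:ℝ)*(f:ℝ)))/(1 - q^f))^n)
      ((1 / (1 - q)) ^ n *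
        ∑ j ∈ range (n + 1), (n.choose j : ℝ) * (-q ^ (x + a)) ^ j / (1 + r * (q ^ f) ^ j)) := by
  have hqf : q ^ f < 1 := pow_lt_one₀ hq0.le hq1 hf.ne'
  have hq : 1 - q ≠ 0 := sub_ne_zero.2 hq1.ne'
  have hqf' : 1 - q ^ f ≠ 0 := sub_ne_zero.2 hqf.ne'
  have hterm (m : ℕ) : (-1:ℝ)^m * r^m * ((1 - q^f)/(1-q))^n *
      ((1 - q^(x + (a:ℝ) + (m:ℝ)*(f:ℝ)))/(1 - q^f))^n =
      (1 / (1 - q)) ^ n * ((-1) ^ m * r ^ m * (1 - q ^ (x + a) * (q ^ f) ^ m) ^ n) := by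
    rw [Real.rpow_add_natCast_mul_natCast hq0, div_pow, div_pow, div_pow, one_pow]
    field_simp
  simp_rw [hterm]
  exact (hasSum_neg_pow_mul_one_sub_mul_pow_pow hr0 hr1 (pow_nonneg hq0.le f) hqf.le
    (q ^ (x + a)) n).mul_left _

/-- Closed form of the Abel-weighted sum over residues, as a function of `r`. -/
noncomputable def qEulerResidueAbelSum (q x : ℝ) (n f : ℕ) (r : ℝ) : ℝ :=
  (1 / (1 - q)) ^ n * ∑ j ∈ range (n + 1),
    (n.choose j : ℝ) * (-q ^ x) ^ j * (1 + (q ^ f) ^ j) / ((1 + q ^ j) * (1 + r * (q ^ f) ^ j))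

theorem sum_residues_eq_qEulerResidueAbelSum (hq0 : 0 < q) (x : ℝ) (n : ℕ) {f : ℕ} (hf : Odd f)
    (r : ℝ) :
    ∑ a ∈ range f, (-1:ℝ) ^ a * ((1 / (1 - q)) ^ n *
        ∑ j ∈ range (n + 1), (n.choose j : ℝ) * (-q ^ (x + a)) ^ j / (1 + r * (q ^ f) ^ j)) =
      qEulerResidueAbelSum q x n f r := by
  calc _ = ∑ a ∈ range f, ∑ j ∈ range (n + 1), (1 / (1 - q)) ^ n *
        ((n.choose j : ℝ) * (-q ^ x) ^ j / (1 + r * (q ^ f) ^ j)) * (-q ^ j) ^ a := by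
        refine sum_congr rfl fun a _ => ?_
        rw [mul_sum, mul_sum]
        refine sum_congr rfl fun j _ => ?_
        rw [Real.rpow_add hq0, Real.rpow_natCast]
        ring
    _ = _ := by
        rw [sum_comm, qEulerResidueAbelSum, mul_sum]
        refine sum_congr rfl fun j _ => ?_
        rw [← mul_sum, sum_range_neg_pow_of_odd hf (by positivity)]
        simp only [div_eq_mul_inv, mul_inv]
        ring

theorem qEulerResidueAbelSum_one (hq0 : 0 < q) (x : ℝ) (n f : ℕ) :
    qEulerResidueAbelSum q x n f 1 = qEulerPoly q n x / 2 := by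
  rw [qEulerResidueAbelSum, qEulerPoly, mul_assoc, mul_div_cancel_left₀ _ two_ne_zero]
  congr 1
  refine sum_congr rfl fun j _ => ?_
  rw [one_mul, mul_comm (1 + q ^ j), ← div_div, mul_div_cancel_right₀ _ (by positivity),
    neg_pow, Real.rpow_mul hq0.le, Real.rpow_natCast]
  ring

theorem continuousAt_qEulerResidueAbelSum_one (hq0 : 0 < q) (x : ℝ) (n f : ℕ) :
    ContinuousAt (qEulerResidueAbelSum q x n f) 1 := by
  unfold qEulerResidueAbelSum
  fun_prop (disch := positivity)

end

/-- grouping the Abel-regularized alternating sum `∑ (−1)^l [x+l]_q^n` by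
residues `l = a + m f` (`0 ≤ a < f`, `f` odd): for each `0 < r < 1` the inner series
converge, and
`lim_{r→1⁻} ∑_{a<f} (−1)^a ∑_m (−1)^m r^m [f]_q^n [(x+a)/f + m]_{q^f}^n = E_{n,q}(x)/2`,
where `[(x+a)/f + m]_{q^f} = (1 − q^{x+a+mf})/(1 − q^f)`. -/
theorem qEulerPoly_multiplication_abel (q : ℝ) (hq0 : 0 < q) (hq1 : q < 1)
    (x : ℝ) (n : ℕ) (f : ℕ) (hf : Odd f) (hfpos : 0 < f) :
    (∀ r ∈ Set.Ioo (0:ℝ) 1, ∀ a ∈ Finset.range f,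
      Summable (fun m : ℕ => (-1:ℝ)^m * r^m * ((1 - q^f)/(1-q))^n *
        ((1 - q^(x + (a:ℝ) + (m:ℝ)*(f:ℝ)))/(1 - q^f))^n)) ∧
    Tendsto (fun r : ℝ => ∑ a ∈ Finset.range f, (-1:ℝ)^a *
        ∑' m : ℕ, (-1:ℝ)^m * r^m * ((1 - q^f)/(1-q))^n *
          ((1 - q^(x + (a:ℝ) + (m:ℝ)*(f:ℝ)))/(1 - q^f))^n)
      (nhdsWithin (1:ℝ) (Set.Iio 1))
      (nhds (qEulerPoly q n x / 2)) := by
  have hseries (r : ℝ) (hr : r ∈ Set.Ioo (0:ℝ) 1) (a : ℕ) :=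
    hasSum_qEuler_residue_series hq0 hq1 x n hfpos hr.1.le hr.2 a
  refine ⟨fun r hr a _ => (hseries r hr a).summable, ?_⟩
  have hclosed : qEulerResidueAbelSum q x n f =ᶠ[𝓝[<] 1] fun r => ∑ a ∈ range f, (-1:ℝ)^a *
        ∑' m : ℕ, (-1:ℝ)^m * r^m * ((1 - q^f)/(1-q))^n *
          ((1 - q^(x + (a:ℝ) + (m:ℝ)*(f:ℝ)))/(1 - q^f))^n := by
    filter_upwards [Ioo_mem_nhdsLT one_pos] with r hr
    simp_rw [(hseries r hr _).tsum_eq]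
    exact (sum_residues_eq_qEulerResidueAbelSum hq0 x n hf r).symm
  rw [← qEulerResidueAbelSum_one hq0 x n f]
  exact (continuousAt_qEulerResidueAbelSum_one hq0 x n f).continuousWithinAt.tendsto.congr' hclosed
end
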